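/- For T = (T_1,…,T_n) in the noncommutative domain D_f(H), define the Poisson kernel K_{f,T} : H → F²(H_n) ⊗ D̄, K_{f,T} h = Σ_{α∈F_n^+} √(b_α) e_α ⊗ Δ_{f,T} T_α* h, where Δ_{f,T} = (I − Σ_{|α|≥1} a_α T_α T_α*)^{1/2} and D̄ = closure of Δ_{f,T}H. Then K_{f,T} is a contraction with K_{f,T}* K_{f,T} = I − Q_{f,T} (where Q_{f,T} = SOT-lim Φ_{f,T}^m(I)), and K_{f,T} T_i* = (W_i* ⊗ I_H) K_{f,T} for i = 1,…,n. In particular, K_{f,T} is an isometry if and only if Q_{f,T} = 0. -/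

import Mathlib

/-!
Expanding `b_α` as a sum over the factorizations `α = γ₁ ⋯ γⱼ` into nonempty words and
regrouping by the number `j` of factors turns `Σ_α b_α ‖Δ T_α* h‖²` into
`Σ_j ⟨Φ^j(Δ²) h, h⟩`, because `Φ^j(X) = Σ_{γ₁,…,γⱼ} a_{γ₁} ⋯ a_{γⱼ} T_{γ₁⋯γⱼ} X T_{γ₁⋯γⱼ}*`.
Since `Δ² = I - Φ(I)` and `Φ` is linear, the series telescopes to `‖h‖² - ⟨Q h, h⟩`. Every term is
nonnegative, which justifies all the rearrangements, and each `α` has only finitely many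
factorizations, so `b_α` is an honest finite sum. Polarization upgrades this to `K* K = I - Q`;
`Q` is positive as a strong limit of the positive operators `Φ^m(I)`, which gives the contraction
and the isometry criterion; and `T_{g_i α} = T_i T_α` gives the intertwining relation.
-/

open Filter Topology
open scoped ComplexConjugate ENNReal

namespace NCDomain

/-- Words in the free monoid `F_n^+` on `n` generators. -/
abbrev Word (n : ℕ) := FreeMonoid (Fin n)

instance {n : ℕ} : DecidableEq (Word n) :=
  inferInstanceAs (DecidableEq (List (Fin n)))

/-- The length `|α|` of a word. -/
def wordLen {n : ℕ} (α : Word n) : ℕ := FreeMonoid.length α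

/-- The coefficients `b_α`, defined by `b_{g_0} = 1` and, for `|α| ≥ 1`,
`b_α = Σ_{j=1}^{|α|} Σ_{γ_1⋯γ_j = α, |γ_i| ≥ 1} a_{γ_1}⋯a_{γ_j}`, the sum running over
all ordered factorizations of `α` into nonempty words. -/
noncomputable def bCoeff {n : ℕ} (a : Word n → ℝ) (α : Word n) : ℝ :=
  if α = 1 then 1
  else ∑' L : {L : List (Word n) // L.prod = α ∧ ∀ w ∈ L, w ≠ 1}, (L.1.map a).prod

/-- `f = Σ_{|α|≥1} a_α X_α` is a positive regular free holomorphic function: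
`a_{g_0} = 0`, `a_α ≥ 0`, `a_{g_i} > 0`, and
`limsup_{k→∞} (Σ_{|α|=k} |a_α|²)^{1/(2k)} < ∞`. -/
def PosRegular {n : ℕ} (a : Word n → ℝ) : Prop :=
  a 1 = 0 ∧ (∀ α, 0 ≤ a α) ∧ (∀ i : Fin n, 0 < a (FreeMonoid.of i)) ∧
    ∃ C : ℝ, ∀ᶠ k in atTop,
      (∑' α : {β : Word n // wordLen β = k}, (a α.1) ^ 2) ≤ C ^ (2 * k)

/-- For a tuple `T` of operators and a word `α = g_{i_1}⋯g_{i_k}`,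
the product `T_α = T_{i_1}⋯T_{i_k}` (and `T_{g_0} = I`). -/
noncomputable def opWord {n : ℕ} {H : Type*} [NormedAddCommGroup H] [NormedSpace ℂ H]
    (T : Fin n → H →L[ℂ] H) (α : Word n) : H →L[ℂ] H :=
  ((FreeMonoid.toList α).map T).prod

/-- `Φ` is the completely positive map `Φ(X) = Σ_{|α|≥1} c_α T_α X T_α*`, the series
converging in the weak operator topology. -/
def IsPhi {n : ℕ} {H : Type*} [NormedAddCommGroup H] [InnerProductSpace ℂ H] [CompleteSpace H]
    (c : Word n → ℝ) (T : Fin n → H →L[ℂ] H) (Φ : (H →L[ℂ] H) → (H →L[ℂ] H)) : Prop :=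
  ∀ (X : H →L[ℂ] H) (x y : H),
    HasSum (fun α : {β : Word n // β ≠ 1} =>
      (c α.1 : ℂ) * (inner ℂ (opWord T α.1 (X ((opWord T α.1).adjoint x))) y : ℂ))
      ((inner ℂ (Φ X x) y : ℂ))

end NCDomain

open scoped ComplexOrder InnerProductSpace

theorem hasSum_sigma_of_nonneg {α : Type*} {β : α → Type*} {f : (Σ x, β x) → ℝ} (hf : 0 ≤ f)
    {g : α → ℝ} {s : ℝ} (hfg : ∀ x, HasSum (fun y => f ⟨x, y⟩) (g x)) (hg : HasSum g s) :
    HasSum f s := by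
  have hf_sum : Summable f := (summable_sigma_of_nonneg hf).2
    ⟨fun x => (hfg x).summable, by simpa only [(hfg _).tsum_eq] using hg.summable⟩
  exact hg.unique (hf_sum.hasSum.sigma hfg) ▸ hf_sum.hasSum

section

variable {E F : Type*} [NormedAddCommGroup E] [InnerProductSpace ℂ E]
  [NormedAddCommGroup F] [InnerProductSpace ℂ F]

theorem ContinuousLinearMap.isPositive_iff_inner_nonneg (T : E →L[ℂ] E) :
    T.IsPositive ↔ ∀ x, 0 ≤ ⟪T x, x⟫_ℂ := by
  simp [isPositive_iff_complex, Complex.nonneg_iff, Complex.ext_iff, and_comm, eq_comm]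

theorem ContinuousLinearMap.isPositive_of_tendsto {ι : Type*} {l : Filter ι} [l.NeBot]
    {A : ι → E →L[ℂ] E} {B : E →L[ℂ] E} (hA : ∀ i, (A i).IsPositive)
    (hB : ∀ x, Tendsto (fun i => A i x) l (𝓝 (B x))) : B.IsPositive :=
  B.isPositive_iff_inner_nonneg.2 fun x =>
    ge_of_tendsto' ((hB x).inner tendsto_const_nhds) fun i => (hA i).inner_nonneg_left x

theorem ContinuousLinearMap.IsPositive.eq_zero_of_re_inner_self {T : E →L[ℂ] E}
    (hT : T.IsPositive) (h : ∀ x, RCLike.re ⟪T x, x⟫_ℂ = 0) : T = 0 := by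
  refine coe_injective ((inner_map_self_eq_zero _).1 fun x => ?_)
  simpa [h] using (hT.isSymmetric.coe_re_inner_apply_self x).symm

theorem hasSum_inner_of_hasSum_norm_sq {ι : Type*} {K : ι → E →ₗ[ℂ] F} {P : E →ₗ[ℂ] E}
    (hP : P.IsSymmetric) (hK : ∀ x, HasSum (fun i => ‖K i x‖ ^ 2) (RCLike.re ⟪P x, x⟫_ℂ))
    (x y : E) :
    HasSum (fun i => ⟪K i x, K i y⟫_ℂ) ⟪P x, y⟫_ℂ := by
  have hK' : ∀ z, HasSum (fun i => (‖K i z‖ : ℂ) ^ 2) ⟪P z, z⟫_ℂ := fun z => by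
    rw [← hP.coe_re_inner_apply_self]
    simpa using Complex.hasSum_ofReal.2 (hK z)
  have := (((hK' (x + y)).sub (hK' (x - y))).add
    (((hK' (x - Complex.I • y)).sub (hK' (x + Complex.I • y))).mul_right Complex.I)).div_const 4
  convert this using 1
  · rfl
  · funext i
    simp [inner_eq_sum_norm_sq_div_four (𝕜 := ℂ) (K i x)]
  · rw [hP.inner_map_polarization]
    simp only [RCLike.I_to_complex]
    ring

end

namespace NCDomain

variable {n : ℕ}

abbrev NonemptyWord (n : ℕ) := {β : Word n // β ≠ 1}

def wordProd (L : List (NonemptyWord n)) : Word n := L.unattach.prod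

def coeffProd (a : Word n → ℝ) (L : List (NonemptyWord n)) : ℝ := (L.unattach.map a).prod

@[simp] lemma wordProd_nil : wordProd ([] : List (NonemptyWord n)) = 1 := rfl

@[simp] lemma wordProd_cons (γ : NonemptyWord n) (L : List (NonemptyWord n)) :
    wordProd (γ :: L) = γ.1 * wordProd L := List.prod_cons

@[simp] lemma coeffProd_nil (a : Word n → ℝ) : coeffProd a [] = 1 := rfl

@[simp] lemma coeffProd_cons (a : Word n → ℝ) (γ : NonemptyWord n) (L : List (NonemptyWord n)) :
    coeffProd a (γ :: L) = a γ * coeffProd a L := List.prod_cons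

lemma coeffProd_nonneg {a : Word n → ℝ} (ha : ∀ α, 0 ≤ a α) (L : List (NonemptyWord n)) :
    0 ≤ coeffProd a L :=
  List.prod_nonneg fun _ hx => by
    obtain ⟨γ, -, rfl⟩ := List.mem_map.1 hx
    exact ha γ

lemma wordLen_prod (L : List (Word n)) : wordLen L.prod = (L.map wordLen).sum := by
  induction L with
  | nil => rfl
  | cons w L ih => simp [← ih, wordLen, FreeMonoid.length_mul]

abbrev Factorization (α : Word n) := {L : List (Word n) // L.prod = α ∧ ∀ w ∈ L, w ≠ 1}

def Factorization.composition {α : Word n} (L : Factorization α) : Composition (wordLen α) where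
  blocks := L.1.map wordLen
  blocks_pos {k} hk := by
    obtain ⟨w, hw, rfl⟩ := List.mem_map.1 hk
    exact Nat.pos_of_ne_zero (FreeMonoid.length_eq_zero.not.2 (L.2.2 w hw))
  blocks_sum := by rw [← wordLen_prod, L.2.1]

lemma Factorization.composition_injective (α : Word n) :
    Function.Injective (Factorization.composition (α := α)) := by
  intro L₁ L₂ h
  have hflat : ∀ L : Factorization α, (L.1.map FreeMonoid.toList).flatten = FreeMonoid.toList α :=
    fun L => by rw [← FreeMonoid.toList_prod, L.2.1]
  have hlen : L₁.1.map wordLen = L₂.1.map wordLen := congrArg Composition.blocks h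
  have := List.eq_iff_flatten_eq.2 ⟨(hflat L₁).trans (hflat L₂).symm, by
    rw [List.map_map, List.map_map]; exact hlen⟩
  exact Subtype.ext ((List.map_injective_iff.2 FreeMonoid.toList.injective) this)

instance (α : Word n) : Finite (Factorization α) :=
  Finite.of_injective _ (Factorization.composition_injective α)

lemma Factorization.eq_nil (L : Factorization (1 : Word n)) : L.1 = [] := by
  have h : (L.1.map wordLen).sum = 0 := by rw [← wordLen_prod, L.2.1]; rfl
  refine List.eq_nil_iff_forall_not_mem.2 fun w hw => L.2.2 w hw ?_
  exact FreeMonoid.length_eq_zero.1 (List.sum_eq_zero_iff.1 h _ (List.mem_map_of_mem hw))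

def fiberEquivFactorization (α : Word n) :
    {L : List (NonemptyWord n) // wordProd L = α} ≃ Factorization α where
  toFun L := ⟨L.1.unattach, L.2, fun _ hw => (List.mem_unattach.1 hw).1⟩
  invFun L := ⟨L.1.attachWith _ L.2.2, by simpa [wordProd] using L.2.1⟩
  left_inv L := Subtype.ext (List.ext_getElem (by simp) fun i _ _ => by simp)
  right_inv L := Subtype.ext List.unattach_attachWith

theorem hasSum_factorization (a : Word n → ℝ) (α : Word n) :
    HasSum (fun L : Factorization α => (L.1.map a).prod) (bCoeff a α) := by
  rw [bCoeff]
  split_ifs with hα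
  · subst hα
    simpa using hasSum_single (⟨[], rfl, by simp⟩ : Factorization (1 : Word n))
      (f := fun L => (L.1.map a).prod) fun L hL => absurd (Subtype.ext (Factorization.eq_nil L)) hL
  · exact (Summable.of_finite).hasSum

theorem hasSum_coeffProd_fiber (a : Word n → ℝ) (α : Word n) :
    HasSum (fun L : {L : List (NonemptyWord n) // wordProd L = α} => coeffProd a L)
      (bCoeff a α) := by
  rw [← (fiberEquivFactorization α).symm.hasSum_iff]
  convert hasSum_factorization a α using 2 with L
  simp [coeffProd, fiberEquivFactorization]

theorem bCoeff_pos {a : Word n → ℝ} (ha : ∀ α, 0 ≤ a α) (hai : ∀ i, 0 < a (FreeMonoid.of i))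
    (α : Word n) : 0 < bCoeff a α := by
  let L : List (NonemptyWord n) :=
    (FreeMonoid.toList α).map fun i => ⟨FreeMonoid.of i, FreeMonoid.of_ne_one i⟩
  have hL : wordProd L = α := by
    apply FreeMonoid.toList.injective
    simp [L, wordProd, FreeMonoid.toList_prod, List.unattach, List.map_map, Function.comp_def,
      ← List.flatMap_def]
  calc 0 < coeffProd a L := List.prod_pos (by simp [L, hai])
    _ ≤ bCoeff a α :=
      le_hasSum (hasSum_coeffProd_fiber a α) ⟨L, hL⟩ fun L' _ => coeffProd_nonneg ha L'

theorem hasSum_bCoeff_mul {a g : Word n → ℝ} {s : ℝ}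
    (h : HasSum (fun L : List (NonemptyWord n) => coeffProd a L * g (wordProd L)) s) :
    HasSum (fun α => bCoeff a α * g α) s := by
  rw [← (Equiv.sigmaFiberEquiv wordProd).hasSum_iff] at h
  refine h.sigma fun α => ?_
  have hfib (L : {L // wordProd L = α}) : coeffProd a L * g (wordProd L) = coeffProd a L * g α := by
    rw [L.2]
  simpa [hfib] using (hasSum_coeffProd_fiber a α).mul_right (g α)

theorem bCoeff_nonneg {a : Word n → ℝ} (ha : ∀ α, 0 ≤ a α) (α : Word n) : 0 ≤ bCoeff a α :=
  (hasSum_coeffProd_fiber a α).nonneg fun _ => coeffProd_nonneg ha _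

section OperatorWords

variable {H : Type*} [NormedAddCommGroup H] [NormedSpace ℂ H]

lemma opWord_eq_lift (T : Fin n → H →L[ℂ] H) : opWord T = FreeMonoid.lift T :=
  funext fun α => (FreeMonoid.lift_apply T α).symm

@[simp] lemma opWord_one (T : Fin n → H →L[ℂ] H) : opWord T 1 = 1 := rfl

@[simp] lemma opWord_mul (T : Fin n → H →L[ℂ] H) (α β : Word n) :
    opWord T (α * β) = opWord T α * opWord T β := by
  simp [opWord_eq_lift]

@[simp] lemma opWord_of (T : Fin n → H →L[ℂ] H) (i : Fin n) : opWord T (FreeMonoid.of i) = T i := by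
  simp [opWord_eq_lift]

end OperatorWords

section Phi

variable {H : Type*} [NormedAddCommGroup H] [InnerProductSpace ℂ H] [CompleteSpace H]
  {c : Word n → ℝ} {T : Fin n → H →L[ℂ] H} {Φ : (H →L[ℂ] H) → (H →L[ℂ] H)}

lemma IsPhi.hasSum_inner_apply_self (hΦ : IsPhi c T Φ) (X : H →L[ℂ] H) (x : H) :
    HasSum (fun γ : NonemptyWord n =>
        (c γ : ℂ) * ⟪X ((opWord T γ).adjoint x), (opWord T γ).adjoint x⟫_ℂ) ⟪Φ X x, x⟫_ℂ := by
  simpa only [ContinuousLinearMap.adjoint_inner_right] using hΦ X x x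

lemma IsPhi.map_sub (hΦ : IsPhi c T Φ) (A B : H →L[ℂ] H) : Φ (A - B) = Φ A - Φ B := by
  ext x
  refine ext_inner_right ℂ fun y => (hΦ (A - B) x y).unique ?_
  simpa [mul_sub, inner_sub_left] using (hΦ A x y).sub (hΦ B x y)

lemma IsPhi.iterate_map_sub (hΦ : IsPhi c T Φ) (j : ℕ) (A B : H →L[ℂ] H) :
    Φ^[j] (A - B) = Φ^[j] A - Φ^[j] B := by
  induction j generalizing A B with
  | zero => rfl
  | succ j ih => simp only [Function.iterate_succ_apply, hΦ.map_sub, ih]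

lemma IsPhi.isPositive_map (hΦ : IsPhi c T Φ) (hc : ∀ α, 0 ≤ c α) {X : H →L[ℂ] H}
    (hX : X.IsPositive) : (Φ X).IsPositive :=
  (Φ X).isPositive_iff_inner_nonneg.2 fun x => (hΦ.hasSum_inner_apply_self X x).nonneg fun γ =>
    mul_nonneg (by exact_mod_cast hc γ) (hX.inner_nonneg_left _)

lemma IsPhi.isPositive_iterate (hΦ : IsPhi c T Φ) (hc : ∀ α, 0 ≤ c α) {X : H →L[ℂ] H}
    (hX : X.IsPositive) (j : ℕ) : (Φ^[j] X).IsPositive := by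
  induction j with
  | zero => exact hX
  | succ j ih => rw [Function.iterate_succ_apply']; exact hΦ.isPositive_map hc ih

theorem IsPhi.hasSum_re_inner_iterate (hΦ : IsPhi c T Φ) (hc : ∀ α, 0 ≤ c α) {X : H →L[ℂ] H}
    (hX : X.IsPositive) (j : ℕ) (x : H) :
    HasSum (fun t : Fin j → NonemptyWord n => coeffProd c (List.ofFn t) *
        RCLike.re ⟪X ((opWord T (wordProd (List.ofFn t))).adjoint x),
          (opWord T (wordProd (List.ofFn t))).adjoint x⟫_ℂ)
      (RCLike.re ⟪(Φ^[j] X) x, x⟫_ℂ) := by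
  induction j generalizing x with
  | zero => simp [ContinuousLinearMap.adjoint_one]
  | succ j ih =>
    rw [← (Fin.consEquiv fun _ => NonemptyWord n).hasSum_iff,
      ← (Equiv.sigmaEquivProd _ _).hasSum_iff]
    refine hasSum_sigma_of_nonneg (fun _ => ?_) (g := fun γ : NonemptyWord n =>
        c γ * RCLike.re ⟪(Φ^[j] X) ((opWord T γ).adjoint x), (opWord T γ).adjoint x⟫_ℂ)
      (fun γ => ?_) ?_
    · exact mul_nonneg (coeffProd_nonneg hc _) (hX.re_inner_nonneg_left _)
    · simpa [List.ofFn_succ, ContinuousLinearMap.mul_def, ContinuousLinearMap.adjoint_comp,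
        mul_assoc]
        using (ih ((opWord T γ).adjoint x)).mul_left (c γ)
    · rw [Function.iterate_succ_apply']
      simpa using Complex.hasSum_re (hΦ.hasSum_inner_apply_self (Φ^[j] X) x)

theorem IsPhi.hasSum_re_inner_iterate_one_sub (hΦ : IsPhi c T Φ) (hc : ∀ α, 0 ≤ c α)
    (hdom : (1 - Φ 1).IsPositive) {Q : H →L[ℂ] H}
    (hQ : ∀ x, Tendsto (fun m => (Φ^[m] 1) x) atTop (𝓝 (Q x))) (x : H) :
    HasSum (fun j => RCLike.re ⟪(Φ^[j] (1 - Φ 1)) x, x⟫_ℂ) (‖x‖ ^ 2 - RCLike.re ⟪Q x, x⟫_ℂ) := by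
  rw [hasSum_iff_tendsto_nat_of_nonneg fun j =>
    (hΦ.isPositive_iterate hc hdom j).re_inner_nonneg_left x]
  have htelescope (m : ℕ) : ∑ j ∈ Finset.range m, RCLike.re ⟪(Φ^[j] (1 - Φ 1)) x, x⟫_ℂ =
      ‖x‖ ^ 2 - RCLike.re ⟪(Φ^[m] 1) x, x⟫_ℂ := by
    have hstep (j : ℕ) : RCLike.re ⟪(Φ^[j] (1 - Φ 1)) x, x⟫_ℂ =
        RCLike.re ⟪(Φ^[j] 1) x, x⟫_ℂ - RCLike.re ⟪(Φ^[j + 1] 1) x, x⟫_ℂ := by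
      rw [hΦ.iterate_map_sub, Function.iterate_succ_apply, sub_apply,
        inner_sub_left, _root_.map_sub]
    rw [Finset.sum_congr rfl fun j _ => hstep j, Finset.sum_range_sub', Function.iterate_zero_apply,
      one_apply_eq_self, inner_self_eq_norm_sq]
  simp_rw [htelescope]
  exact tendsto_const_nhds.sub
    ((Complex.continuous_re.tendsto _).comp ((hQ x).inner tendsto_const_nhds))

end Phi

section PoissonKernel

variable {H : Type*} [NormedAddCommGroup H] [InnerProductSpace ℂ H] [CompleteSpace H]

noncomputable def poissonKernel (a : Word n → ℝ) (T : Fin n → H →L[ℂ] H) (Δ : H →L[ℂ] H)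
    (α : Word n) : H →L[ℂ] H :=
  Real.sqrt (bCoeff a α) • (Δ ∘L (opWord T α).adjoint)

variable {a : Word n → ℝ} {T : Fin n → H →L[ℂ] H} {Δ : H →L[ℂ] H}

theorem hasSum_norm_poissonKernel_sq (ha : ∀ α, 0 ≤ a α) {Φ : (H →L[ℂ] H) → (H →L[ℂ] H)}
    (hΦ : IsPhi a T Φ) (hdom : (1 - Φ 1).IsPositive) (hΔ : IsSelfAdjoint Δ)
    (hΔsq : Δ ∘L Δ = 1 - Φ 1) {Q : H →L[ℂ] H}
    (hQ : ∀ x, Tendsto (fun m => (Φ^[m] 1) x) atTop (𝓝 (Q x))) (x : H) :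
    HasSum (fun α => ‖poissonKernel a T Δ α x‖ ^ 2) (‖x‖ ^ 2 - RCLike.re ⟪Q x, x⟫_ℂ) := by
  have hterm (α : Word n) : ‖poissonKernel a T Δ α x‖ ^ 2 =
      bCoeff a α * RCLike.re ⟪(1 - Φ 1) ((opWord T α).adjoint x), (opWord T α).adjoint x⟫_ℂ := by
    rw [poissonKernel, smul_apply, norm_smul, mul_pow, Real.norm_of_nonneg (Real.sqrt_nonneg _),
      Real.sq_sqrt (bCoeff_nonneg ha α), ← hΔsq, ContinuousLinearMap.comp_apply,
      ContinuousLinearMap.comp_apply, ← ContinuousLinearMap.adjoint_inner_right, hΔ.adjoint_eq,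
      inner_self_eq_norm_sq]
  simp_rw [hterm]
  refine hasSum_bCoeff_mul ?_
  rw [← List.equivSigmaTuple.symm.hasSum_iff]
  exact hasSum_sigma_of_nonneg
    (fun _ => mul_nonneg (coeffProd_nonneg ha _) (hdom.re_inner_nonneg_left _))
    (hΦ.hasSum_re_inner_iterate ha hdom · x) (hΦ.hasSum_re_inner_iterate_one_sub ha hdom hQ x)

theorem poissonKernel_apply_adjoint (i : Fin n) (α : Word n)
    (hb : 0 < bCoeff a (FreeMonoid.of i * α)) (h : H) :
    poissonKernel a T Δ α ((T i).adjoint h) =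
      Real.sqrt (bCoeff a α / bCoeff a (FreeMonoid.of i * α)) •
        poissonKernel a T Δ (FreeMonoid.of i * α) h := by
  simp only [poissonKernel, smul_apply, ContinuousLinearMap.comp_apply,
    opWord_mul, opWord_of, ContinuousLinearMap.mul_def, ContinuousLinearMap.adjoint_comp, smul_smul]
  rw [Real.sqrt_div' _ hb.le, div_mul_cancel₀ _ (Real.sqrt_pos.2 hb).ne']

end PoissonKernel

/-- The Poisson kernel is encoded by its components `K_{f,T} h = (√(b_α) Δ T_α* h)_α`, identifying
`F²(H_n) ⊗ D̄` with `ℓ²(F_n^+, H)`. In these coordinates `W_i* ⊗ I` moves the component at `g_i α`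
to `α` with the weight `√(b_α / b_{g_i α})`, which is the form of the intertwining relation. -/
theorem poisson_kernel_properties {n : ℕ} {H : Type*} [NormedAddCommGroup H]
    [InnerProductSpace ℂ H] [CompleteSpace H]
    (a : Word n → ℝ) (hreg : PosRegular a)
    (T : Fin n → H →L[ℂ] H) (Φ : (H →L[ℂ] H) → (H →L[ℂ] H))
    (hΦ : IsPhi a T Φ)
    (hdom : ((1 : H →L[ℂ] H) - Φ 1).IsPositive)
    (Δ : H →L[ℂ] H) (hΔpos : Δ.IsPositive) (hΔsq : Δ ∘L Δ = 1 - Φ 1)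
    (Q : H →L[ℂ] H)
    (hQ : ∀ x : H, Tendsto (fun m => (Φ^[m] 1) x) atTop (𝓝 (Q x))) :
    (∀ h : H,
      Summable (fun α : Word n => ‖Real.sqrt (bCoeff a α) • Δ ((opWord T α).adjoint h)‖ ^ 2) ∧
      (∑' α : Word n, ‖Real.sqrt (bCoeff a α) • Δ ((opWord T α).adjoint h)‖ ^ 2) ≤ ‖h‖ ^ 2) ∧
    (∀ h h' : H,
      HasSum (fun α : Word n =>
          (inner ℂ (Real.sqrt (bCoeff a α) • Δ ((opWord T α).adjoint h))
            (Real.sqrt (bCoeff a α) • Δ ((opWord T α).adjoint h')) : ℂ))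
        ((inner ℂ h h' : ℂ) - (inner ℂ (Q h) h' : ℂ))) ∧
    (∀ (i : Fin n) (h : H) (α : Word n),
      Real.sqrt (bCoeff a α) • Δ ((opWord T α).adjoint ((T i).adjoint h)) =
        Real.sqrt (bCoeff a α / bCoeff a (FreeMonoid.of i * α)) •
          (Real.sqrt (bCoeff a (FreeMonoid.of i * α)) •
            Δ ((opWord T (FreeMonoid.of i * α)).adjoint h))) ∧
    ((∀ h : H,
        (∑' α : Word n, ‖Real.sqrt (bCoeff a α) • Δ ((opWord T α).adjoint h)‖ ^ 2) = ‖h‖ ^ 2)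
      ↔ Q = 0) := by
  obtain ⟨-, ha, hai, -⟩ := hreg
  have hQpos : Q.IsPositive := ContinuousLinearMap.isPositive_of_tendsto
    (fun m => hΦ.isPositive_iterate ha ContinuousLinearMap.isPositive_one m) hQ
  have hK (x : H) : HasSum (fun α => ‖Real.sqrt (bCoeff a α) • Δ ((opWord T α).adjoint x)‖ ^ 2)
      (‖x‖ ^ 2 - RCLike.re ⟪Q x, x⟫_ℂ) :=
    hasSum_norm_poissonKernel_sq ha hΦ hdom hΔpos.isSelfAdjoint hΔsq hQ x
  refine ⟨fun h => ⟨(hK h).summable, ?_⟩, fun h h' => ?_,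
    fun i h α => poissonKernel_apply_adjoint i α (bCoeff_pos ha hai _) h, ?_⟩
  · exact (hK h).tsum_eq.trans_le (sub_le_self _ (hQpos.re_inner_nonneg_left h))
  · have hsymm : ((1 - Q : H →L[ℂ] H) : H →ₗ[ℂ] H).IsSymmetric :=
      ContinuousLinearMap.isPositive_one.isSymmetric.sub hQpos.isSymmetric
    have hK' (x : H) : HasSum (fun α => ‖poissonKernel a T Δ α x‖ ^ 2)
        (RCLike.re ⟪(1 - Q) x, x⟫_ℂ) := by
      rw [sub_apply, one_apply_eq_self, inner_sub_left, _root_.map_sub, inner_self_eq_norm_sq]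
      exact hK x
    have := hasSum_inner_of_hasSum_norm_sq
      (K := fun α => (poissonKernel a T Δ α : H →ₗ[ℂ] H)) hsymm hK' h h'
    simp only [ContinuousLinearMap.coe_coe, sub_apply, one_apply_eq_self, inner_sub_left] at this
    exact this
  · simp only [fun h => (hK h).tsum_eq, sub_eq_self]
    exact ⟨hQpos.eq_zero_of_re_inner_self, fun hQ0 h => by simp [hQ0]⟩

end NCDomain
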